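/- The bracket [(α,v,β), (α',w,β')] = (0, αD(w) − α'D(v), B_V(D(v), w)) on g = F × V × F is bilinear, alternating, and satisfies the Jacobi identity, so it makes g a Lie algebra; and the symmetric bilinear form B((α,v,β), (α',w,β')) = B_V(v,w) + αβ' + α'β is a nondegenerate invariant metric on this Lie algebra, i.e. B([p,q], r) = B(p, [q,r]) for all p, q, r ∈ g. -/

import Mathlib

section

variable {F : Type*} [Field F] {V : Type*} [AddCommGroup V] [Module F V]

/-- The bracket of the double extension `g = F × V × F` of `V` by `(D, ω)`:
`[(α,v,β), (α',w,β')] = (0, αD(w) − α'D(v), B_V(D(v), w))`. -/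
def deBracket (BV : V →ₗ[F] V →ₗ[F] F) (D : V →ₗ[F] V) :
    (F × V × F) → (F × V × F) → (F × V × F) :=
  fun p q => (0, p.1 • D q.2.1 - q.1 • D p.2.1, BV (D p.2.1) q.2.1)

/-- The symmetric bilinear form `B((α,v,β), (α',w,β')) = B_V(v,w) + αβ' + α'β`. -/
def deForm (BV : V →ₗ[F] V →ₗ[F] F) : (F × V × F) → (F × V × F) → F :=
  fun p q => BV p.2.1 q.2.1 + p.1 * q.2.2 + q.1 * p.2.2

end

/-- the double-extension bracket on `g = F × V × F` is bilinear, alternating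
and satisfies the Jacobi identity, and `B` is a nondegenerate invariant metric for it. -/
theorem stmt16 {F : Type*} [Field F] [CharZero F] {V : Type*}
    [AddCommGroup V] [Module F V] [Module.Finite F V]
    (BV : V →ₗ[F] V →ₗ[F] F)
    (hBVsymm : ∀ v w : V, BV v w = BV w v)
    (hBVnondeg : ∀ v : V, (∀ w : V, BV v w = 0) → v = 0)
    (D : V →ₗ[F] V)
    (hD : ∀ v w : V, BV (D v) w = -BV v (D w)) :
    -- bilinearity
    (∀ p q r : F × V × F, deBracket BV D (p + q) r = deBracket BV D p r + deBracket BV D q r)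
    ∧ (∀ (t : F) (p q : F × V × F), deBracket BV D (t • p) q = t • deBracket BV D p q)
    ∧ (∀ p q r : F × V × F, deBracket BV D p (q + r) = deBracket BV D p q + deBracket BV D p r)
    ∧ (∀ (t : F) (p q : F × V × F), deBracket BV D p (t • q) = t • deBracket BV D p q)
    -- alternating
    ∧ (∀ p : F × V × F, deBracket BV D p p = 0)
    -- Jacobi identity
    ∧ (∀ p q r : F × V × F,
        deBracket BV D (deBracket BV D p q) r + deBracket BV D (deBracket BV D q r) p
          + deBracket BV D (deBracket BV D r p) q = 0)
    -- B is symmetric, nondegenerate and invariant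
    ∧ (∀ p q : F × V × F, deForm BV p q = deForm BV q p)
    ∧ (∀ p : F × V × F, (∀ q : F × V × F, deForm BV p q = 0) → p = 0)
    ∧ (∀ p q r : F × V × F, deForm BV (deBracket BV D p q) r = deForm BV p (deBracket BV D q r)) := by
  have hDD : ∀ v w : V, BV (D (D v)) w = BV (D (D w)) v := by
    intro v w
    rw [hD (D v) w, hD (D w) v, neg_inj, hBVsymm]
  refine ⟨?_, ?_, ?_, ?_, ?_, ?_, ?_, ?_, ?_⟩
  · intro p q r
    simp only [deBracket, Prod.mk_add_mk, Prod.fst_add, Prod.snd_add, map_add, map_smul,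
      LinearMap.add_apply, Prod.mk.injEq]
    refine ⟨by ring, ?_, trivial⟩
    module
  · intro t p q
    simp only [deBracket, Prod.smul_mk, Prod.smul_fst, Prod.smul_snd, map_smul, smul_eq_mul,
      LinearMap.smul_apply, Prod.mk.injEq]
    refine ⟨by simp, ?_, trivial⟩
    module
  · intro p q r
    simp only [deBracket, Prod.mk_add_mk, Prod.fst_add, Prod.snd_add, map_add, map_smul,
      Prod.mk.injEq]
    refine ⟨by ring, ?_, trivial⟩
    module
  · intro t p q
    simp only [deBracket, Prod.smul_mk, Prod.smul_fst, Prod.smul_snd, map_smul, smul_eq_mul,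
      LinearMap.smul_apply, Prod.mk.injEq]
    refine ⟨by simp, ?_, trivial⟩
    module
  · intro p
    have : BV (D p.2.1) p.2.1 = 0 := by
      have h := hD p.2.1 p.2.1
      rw [hBVsymm p.2.1 (D p.2.1)] at h
      linear_combination h / 2
    simp [deBracket, this, Prod.ext_iff]
  · intro p q r
    simp only [deBracket, map_sub, map_smul, LinearMap.sub_apply, LinearMap.smul_apply,
      smul_eq_mul, Prod.ext_iff, Prod.fst_add, Prod.snd_add, Prod.fst_zero, Prod.snd_zero]
    refine ⟨by ring, ?_, ?_⟩
    · module
    · linear_combination p.1 * hDD q.2.1 r.2.1 + q.1 * hDD r.2.1 p.2.1 + r.1 * hDD p.2.1 q.2.1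
  · intro p q
    simp only [deForm]
    rw [hBVsymm]; ring
  · intro p hp
    have h1 := hp (0, 0, 1)
    have h2 := hp (1, 0, 0)
    simp [deForm] at h1 h2
    have h3 : p.2.1 = 0 := by
      apply hBVnondeg
      intro w
      have := hp (0, w, 0)
      simpa [deForm] using this
    exact Prod.ext h1 (Prod.ext h3 h2)
  · intro p q r
    simp only [deForm, deBracket, map_sub, map_smul, LinearMap.sub_apply,
      LinearMap.smul_apply, smul_eq_mul]
    have h3 := hD p.2.1 q.2.1
    have h4 := hD p.2.1 r.2.1
    linear_combination (-q.1) * h4 + r.1 * h3
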